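/- For an integer r ≥ 0 and τ ∈ ℂ define c_r(τ) := √π·2^{r−τ}·(−1)^r·Γ(1/2 + r − τ)·Γ(−r + 2τ)/(r!·Γ(1/2 + τ)·Γ(1/2 − τ)). Then as τ → 1/2 (through values where the expression is defined), c_0(τ) tends to √(π/2), and for every integer r ≥ 1, c_r(τ) tends to 2^{r−1/2}·√π/(2·r!). -/
import Mathlib


open Complex Topology

/-- The residue factor
`c_r(τ) = √π 2^{r−τ} (−1)^r Γ(1/2+r−τ) Γ(−r+2τ) / (r! Γ(1/2+τ) Γ(1/2−τ))`. -/
noncomputable def cResidue (r : ℕ) (τ : ℂ) : ℂ :=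
  (Real.sqrt Real.pi : ℂ) * 2 ^ ((r : ℂ) - τ) * (-1) ^ r *
    Complex.Gamma (1 / 2 + (r : ℂ) - τ) * Complex.Gamma (-(r : ℂ) + 2 * τ) /
    ((r.factorial : ℂ) * Complex.Gamma (1 / 2 + τ) * Complex.Gamma (1 / 2 - τ))

/-- The set of `τ` at which the expression `c_r(τ)` is defined, i.e. none of the four
Gamma factors is evaluated at a pole (a nonpositive integer). -/
def cResidueDom (r : ℕ) : Set ℂ :=
  {τ : ℂ | (∀ m : ℕ, -(r : ℂ) + 2 * τ ≠ -(m : ℂ)) ∧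
    (∀ m : ℕ, (1 : ℂ) / 2 + (r : ℂ) - τ ≠ -(m : ℂ)) ∧
    (∀ m : ℕ, (1 : ℂ) / 2 + τ ≠ -(m : ℂ)) ∧
    (∀ m : ℕ, (1 : ℂ) / 2 - τ ≠ -(m : ℂ))}

lemma myGamma_add_nat (z : ℂ) (n : ℕ) (h : ∀ k : ℕ, k < n → z + k ≠ 0) :
    Complex.Gamma (z + n) = (∏ k ∈ Finset.range n, (z + k)) * Complex.Gamma z := by
  induction n with
  | zero => simp
  | succ n ih =>
    have h1 : z + n ≠ 0 := h n (by omega)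
    have e : z + ((n : ℕ) + 1 : ℕ) = (z + n) + 1 := by push_cast; ring
    rw [e, Complex.Gamma_add_one _ h1, ih (fun k hk => h k (by omega)),
      Finset.prod_range_succ]
    ring

lemma nat_prod_sub (n : ℕ) : ∏ k ∈ Finset.range n, (n - k) = n.factorial := by
  induction n with
  | zero => simp
  | succ n ih =>
    rw [Finset.prod_range_succ']
    simp only [Nat.succ_sub_succ, Nat.sub_zero, ih, Nat.factorial_succ]
    ring

lemma prod_sub_n (n : ℕ) : ∏ k ∈ Finset.range n, ((k : ℂ) - n) = (-1) ^ n * n.factorial := by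
  have h1 : ∏ k ∈ Finset.range n, ((k : ℂ) - n)
      = ∏ k ∈ Finset.range n, (-1 : ℂ) * ((n - k : ℕ) : ℂ) := by
    apply Finset.prod_congr rfl
    intro k hk
    have hk' : k < n := Finset.mem_range.mp hk
    have : ((n - k : ℕ) : ℂ) = (n : ℂ) - k := by
      push_cast [Nat.cast_sub hk'.le]; ring
    rw [this]; ring
  rw [h1, Finset.prod_mul_distrib, Finset.prod_const, ← Nat.cast_prod, nat_prod_sub]
  simp

lemma cResidue_eq (r : ℕ) (τ : ℂ) (hτ : τ ∈ cResidueDom r) :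
    cResidue r τ = (Real.sqrt Real.pi : ℂ) * 2 ^ ((r : ℂ) - τ) * (-1) ^ r *
      (∏ k ∈ Finset.range r, ((1 : ℂ)/2 - τ + k)) * Complex.Gamma (2 * τ) /
      ((r.factorial : ℂ) * Complex.Gamma (1 / 2 + τ) *
        ∏ k ∈ Finset.range r, (2 * τ - r + k)) := by
  obtain ⟨h1, h2, h3, h4⟩ := hτ
  have e1 : Complex.Gamma (1 / 2 + (r : ℂ) - τ)
      = (∏ k ∈ Finset.range r, ((1 : ℂ)/2 - τ + k)) * Complex.Gamma (1/2 - τ) := by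
    have := myGamma_add_nat (1/2 - τ) r (fun k _ hk0 => h4 k (by linear_combination hk0))
    rw [show (1 : ℂ) / 2 + (r : ℂ) - τ = (1/2 - τ) + r by ring, this]
  have e2 : Complex.Gamma (2 * τ)
      = (∏ k ∈ Finset.range r, (2 * τ - r + k)) * Complex.Gamma (-(r : ℂ) + 2 * τ) := by
    have := myGamma_add_nat (2 * τ - r) r (fun k _ hk0 => h1 k (by linear_combination hk0))
    rw [show (2 * τ : ℂ) = (2 * τ - r) + r by ring, this]
    congr 1
    · apply Finset.prod_congr rfl; intro k _; ring
    · congr 1; ring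
  have hP2 : (∏ k ∈ Finset.range r, (2 * τ - r + k)) ≠ 0 := by
    rw [Finset.prod_ne_zero_iff]
    intro k _ hk0
    exact h1 k (by linear_combination hk0)
  have hG4 : Complex.Gamma (1/2 - τ) ≠ 0 := Complex.Gamma_ne_zero h4
  have hG3 : Complex.Gamma (1/2 + τ) ≠ 0 := Complex.Gamma_ne_zero h3
  have hF : ((r.factorial : ℂ)) ≠ 0 := by exact_mod_cast r.factorial_ne_zero
  rw [cResidue, e1, e2,
    div_eq_div_iff (mul_ne_zero (mul_ne_zero hF hG3) hG4)
      (mul_ne_zero (mul_ne_zero hF hG3) hP2)]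
  ring

/-- As `τ → 1/2` through values where it is defined, `c_0(τ) → √(π/2)`
and, for `r ≥ 1`, `c_r(τ) → 2^{r−1/2} √π / (2 · r!)`. -/
theorem stmt16 :
    Filter.Tendsto (cResidue 0) (𝓝[cResidueDom 0] ((1 : ℂ) / 2))
      (𝓝 ((Real.sqrt (Real.pi / 2) : ℂ))) ∧
    ∀ r : ℕ, 1 ≤ r →
      Filter.Tendsto (cResidue r) (𝓝[cResidueDom r] ((1 : ℂ) / 2))
        (𝓝 ((2 : ℂ) ^ ((r : ℂ) - 1 / 2) * (Real.sqrt Real.pi : ℂ) /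
          (2 * (r.factorial : ℂ)))) := by
  have hone : ∀ m : ℕ, (1 : ℂ) ≠ -(m : ℂ) := by
    intro m h
    have h' : (1 : ℝ) = -(m : ℝ) := by exact_mod_cast h
    have := Nat.cast_nonneg (α := ℝ) m
    linarith
  have hΓ2 : ContinuousAt (fun τ : ℂ => Complex.Gamma (2 * τ)) (1/2) := by
    have h1 : ContinuousAt Complex.Gamma ((fun τ : ℂ => 2 * τ) (1/2)) := by
      simp only []
      rw [show (2 : ℂ) * (1/2) = 1 by norm_num]
      exact (Complex.differentiableAt_Gamma _ hone).continuousAt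
    exact h1.comp (by fun_prop)
  have hΓ3 : ContinuousAt (fun τ : ℂ => Complex.Gamma (1/2 + τ)) (1/2) := by
    have h1 : ContinuousAt Complex.Gamma ((fun τ : ℂ => 1/2 + τ) (1/2)) := by
      simp only []
      rw [show (1:ℂ)/2 + 1/2 = 1 by norm_num]
      exact (Complex.differentiableAt_Gamma _ hone).continuousAt
    exact h1.comp (by fun_prop)
  have hΓ3v : Complex.Gamma ((1:ℂ)/2 + 1/2) = 1 := by
    rw [show (1:ℂ)/2 + 1/2 = 1 by norm_num, Complex.Gamma_one]
  have hΓ2v : Complex.Gamma ((2:ℂ) * (1/2)) = 1 := by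
    rw [show (2:ℂ) * (1/2) = 1 by norm_num, Complex.Gamma_one]
  constructor
  · -- r = 0
    set F : ℂ → ℂ := fun τ =>
      (Real.sqrt Real.pi : ℂ) * 2 ^ (((0:ℕ) : ℂ) - τ) * Complex.Gamma (2 * τ) /
        Complex.Gamma (1/2 + τ) with hF
    have heq : ∀ τ ∈ cResidueDom 0, cResidue 0 τ = F τ := by
      intro τ hτ
      rw [cResidue_eq 0 τ hτ]
      simp [hF]
    have hcont : ContinuousAt F (1/2) := by
      apply ContinuousAt.div
      · exact (continuousAt_const.mul
          ((continuousAt_const_cpow two_ne_zero).comp (by fun_prop))).mul hΓ2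
      · exact hΓ3
      · rw [hΓ3v]; norm_num
    have hval : F (1/2) = (Real.sqrt (Real.pi / 2) : ℂ) := by
      simp only [hF]
      rw [hΓ2v, hΓ3v]
      have e1 : ((0:ℕ) : ℂ) - 1/2 = ((-(1/2) : ℝ) : ℂ) := by push_cast; norm_num
      rw [e1, show (2:ℂ) = ((2:ℝ):ℂ) by norm_num, ← Complex.ofReal_cpow (by norm_num : (0:ℝ) ≤ 2)]
      rw [show Real.sqrt (Real.pi/2) = Real.sqrt Real.pi * (2:ℝ) ^ (-(1/2):ℝ) by
        rw [Real.rpow_neg (by norm_num), ← Real.sqrt_eq_rpow,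
          show Real.pi / 2 = Real.pi * 2⁻¹ by ring,
          Real.sqrt_mul Real.pi_pos.le, Real.sqrt_inv]]
      push_cast
      ring
    have hten : Filter.Tendsto F (𝓝[cResidueDom 0] ((1:ℂ)/2)) (𝓝 (F (1/2))) :=
      hcont.continuousWithinAt
    rw [hval] at hten
    refine hten.congr' ?_
    exact Filter.eventuallyEq_of_mem self_mem_nhdsWithin (fun τ hτ => (heq τ hτ).symm)
  · rintro r hr
    obtain ⟨n, rfl⟩ : ∃ n, r = n + 1 := ⟨r - 1, by omega⟩
    set F : ℂ → ℂ := fun τ =>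
      (Real.sqrt Real.pi : ℂ) * 2 ^ (((n+1:ℕ) : ℂ) - τ) * (-1) ^ (n+1) *
        (∏ k ∈ Finset.range n, ((1:ℂ)/2 - τ + (k+1))) * Complex.Gamma (2 * τ) * (-(1/2)) /
        (((n+1).factorial : ℂ) * Complex.Gamma (1/2 + τ) *
          ∏ k ∈ Finset.range n, (2 * τ - ((n+1:ℕ) : ℂ) + k)) with hF
    have heq : ∀ τ ∈ cResidueDom (n+1), cResidue (n+1) τ = F τ := by
      intro τ hτ
      obtain ⟨h1, h2, h3, h4⟩ := hτ
      have hG3 : Complex.Gamma (1/2 + τ) ≠ 0 := Complex.Gamma_ne_zero h3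
      have hFac : (((n+1).factorial : ℂ)) ≠ 0 := by exact_mod_cast (n+1).factorial_ne_zero
      have hQ2 : (∏ k ∈ Finset.range n, (2 * τ - ((n+1:ℕ) : ℂ) + k)) ≠ 0 := by
        rw [Finset.prod_ne_zero_iff]
        intro k hk hk0
        exact h1 k (by linear_combination hk0)
      have h2τ : 2 * τ - 1 ≠ 0 := by
        intro h
        apply h1 n
        push_cast
        linear_combination h
      rw [cResidue_eq (n+1) τ ⟨h1, h2, h3, h4⟩, hF]
      rw [Finset.prod_range_succ', Finset.prod_range_succ]
      have e2 : 2 * τ - ((n+1:ℕ) : ℂ) + (n : ℂ) = 2 * τ - 1 := by push_cast; ring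
      rw [e2]
      have e3 : ∀ k ∈ Finset.range n, (1:ℂ)/2 - τ + ((k+1 : ℕ) : ℂ)
          = (1:ℂ)/2 - τ + ((k : ℂ) + 1) := by intro k _; push_cast; ring
      rw [Finset.prod_congr rfl e3]
      rw [div_eq_div_iff
        (by exact mul_ne_zero (mul_ne_zero hFac hG3) (mul_ne_zero hQ2 h2τ))
        (by exact mul_ne_zero (mul_ne_zero hFac hG3) hQ2)]
      ring
    have hDval : (((n+1).factorial : ℂ) * Complex.Gamma (1/2 + (1/2 : ℂ)) *
        ∏ k ∈ Finset.range n, (2 * (1/2 : ℂ) - ((n+1:ℕ) : ℂ) + k))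
        = ((n+1).factorial : ℂ) * ((-1)^n * (n.factorial : ℂ)) := by
      rw [hΓ3v]
      have : ∀ k ∈ Finset.range n, 2 * ((1:ℂ)/2) - ((n+1:ℕ) : ℂ) + (k : ℂ)
          = (k : ℂ) - n := by intro k _; push_cast; ring
      rw [Finset.prod_congr rfl this, prod_sub_n]
      ring
    have hFac : (((n+1).factorial : ℂ)) ≠ 0 := by exact_mod_cast (n+1).factorial_ne_zero
    have hnFac : ((n.factorial : ℂ)) ≠ 0 := by exact_mod_cast n.factorial_ne_zero
    have hDne : (((n+1).factorial : ℂ) * Complex.Gamma (1/2 + (1/2 : ℂ)) *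
        ∏ k ∈ Finset.range n, (2 * (1/2 : ℂ) - ((n+1:ℕ) : ℂ) + k)) ≠ 0 := by
      rw [hDval]
      exact mul_ne_zero hFac (mul_ne_zero (pow_ne_zero _ (by norm_num)) hnFac)
    have hcont : ContinuousAt F (1/2) := by
      apply ContinuousAt.div
      · exact ((((continuousAt_const.mul
          ((continuousAt_const_cpow two_ne_zero).comp (by fun_prop))).mul
          continuousAt_const).mul (by fun_prop)).mul hΓ2).mul continuousAt_const
      · exact (continuousAt_const.mul hΓ3).mul (by fun_prop)
      · exact hDne
    have hval : F (1/2) = (2 : ℂ) ^ (((n+1:ℕ) : ℂ) - 1/2) * (Real.sqrt Real.pi : ℂ) /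
        (2 * ((n+1).factorial : ℂ)) := by
      simp only [hF]
      rw [hΓ2v, hDval]
      have e4 : ∀ k ∈ Finset.range n, (1:ℂ)/2 - 1/2 + ((k : ℂ)+1) = ((k+1 : ℕ) : ℂ) := by
        intro k _; push_cast; ring
      rw [Finset.prod_congr rfl e4, ← Nat.cast_prod,
        Finset.prod_range_add_one_eq_factorial]
      field_simp
      ring
    have hten : Filter.Tendsto F (𝓝[cResidueDom (n+1)] ((1:ℂ)/2)) (𝓝 (F (1/2))) :=
      hcont.continuousWithinAt
    rw [hval] at hten
    refine hten.congr' ?_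
    exact Filter.eventuallyEq_of_mem self_mem_nhdsWithin (fun τ hτ => (heq τ hτ).symm)
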